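/- arXiv:2501.15545 — 2 statements merged into one kernel-verified Lean document; each statement's English description precedes it below -/
import Mathlib

section
/- Let a₁ < a₂ with a₁, a₂ > 0 and γ = 1 + a₁ + a₂. For every c₁ ∈ [0,1], the maximum of firm 2's two candidate market shares, max((c₁+a₁)/γ, (1+a₁−c₁)/γ), is strictly greater than a₁/(a₁+a₂), the share firm 2 gets by choosing c₂ = c₁. -/
theorem stmt_4 (a₁ a₂ : ℝ) (ha₁ : 0 < a₁) (ha₂ : 0 < a₂) (h12 : a₁ < a₂) :
    ∀ c₁ ∈ Set.Icc (0:ℝ) 1,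
      max ((c₁ + a₁) / (1 + a₁ + a₂)) ((1 + a₁ - c₁) / (1 + a₁ + a₂)) >
        a₁ / (a₁ + a₂) := by
  intro c₁ hc
  have hγ : (0:ℝ) < 1 + a₁ + a₂ := by linarith
  have hs : (0:ℝ) < a₁ + a₂ := by linarith
  have hmax : max ((c₁ + a₁) / (1 + a₁ + a₂)) ((1 + a₁ - c₁) / (1 + a₁ + a₂)) ≥
      ((c₁ + a₁) / (1 + a₁ + a₂) + (1 + a₁ - c₁) / (1 + a₁ + a₂)) / 2 := by
    rcases le_total ((c₁ + a₁) / (1 + a₁ + a₂)) ((1 + a₁ - c₁) / (1 + a₁ + a₂)) with h | h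
    · rw [max_eq_right h]; linarith
    · rw [max_eq_left h]; linarith
  have key : ((c₁ + a₁) / (1 + a₁ + a₂) + (1 + a₁ - c₁) / (1 + a₁ + a₂)) / 2 >
      a₁ / (a₁ + a₂) := by
    rw [← add_div]
    have : (c₁ + a₁ + (1 + a₁ - c₁)) / (1 + a₁ + a₂) / 2 =
        (1 + 2 * a₁) / (2 * (1 + a₁ + a₂)) := by field_simp; ring
    rw [this, gt_iff_lt, div_lt_div_iff₀ hs (by linarith)]
    nlinarith
  linarith
end

section
/- Let a > 0. For all c_r ∈ [1/2,1] and c_l with 1−c_r ≤ c_l ≤ c_r, the quantity (a + 3c_l − c_r)/(2+3a) (region-3 optimal choice) attains its minimum over the region c_r ∈ [1/2, (1+4a+2a²)/(2+7a+3a²)], c_l ∈ [1−c_r, c_r] at c_r = (1+4a+2a²)/(2+7a+3a²), c_l = 1−c_r, where it equals (a+1)²/(2+7a+3a²), and (a+1)²/(2+7a+3a²) > (1+a)/(4+3a). -/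
theorem stmt_17 (a : ℝ) (ha : 0 < a) :
    (∀ cr ∈ Set.Icc (1/2 : ℝ) ((1 + 4*a + 2*a^2)/(2 + 7*a + 3*a^2)),
      ∀ cl ∈ Set.Icc (1 - cr) cr,
        (a + 3*cl - cr)/(2 + 3*a) ≥ (a + 1)^2/(2 + 7*a + 3*a^2)) ∧
    ((a + 3*(1 - (1 + 4*a + 2*a^2)/(2 + 7*a + 3*a^2))
        - (1 + 4*a + 2*a^2)/(2 + 7*a + 3*a^2))/(2 + 3*a)
      = (a + 1)^2/(2 + 7*a + 3*a^2)) ∧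
    (a + 1)^2/(2 + 7*a + 3*a^2) > (1 + a)/(4 + 3*a) := by
  have hD : (0:ℝ) < 2 + 7*a + 3*a^2 := by nlinarith
  have hE : (0:ℝ) < 2 + 3*a := by linarith
  refine ⟨?_, ?_, ?_⟩
  · rintro cr ⟨h1, h2⟩ cl ⟨h3, h4⟩
    rw [ge_iff_le, div_le_div_iff₀ hD hE]
    rw [le_div_iff₀ hD] at h2
    nlinarith
  · field_simp
    ring
  · rw [gt_iff_lt, div_lt_div_iff₀ (by linarith) hD]
    nlinarith
end
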